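/- arXiv:1701.01470 — 3 statements merged into one kernel-verified Lean document; each statement's English description precedes it below -/
import Mathlib

section
/- Let λ(q) = x·log q − μ(q−1) with x > μ > 0. Define q^max > 1 to be the unique root of λ on (1,∞), and q^mle = x/μ. Then q^mle − 1 < (q^max − 1)/2. -/
/-!
At the root, `x / μ = (q - 1) / log q` is the logarithmic mean of `1` and `q = qmax`, which is
strictly below their arithmetic mean `(q + 1) / 2`; subtracting `1` gives the claim.
-/

open Real

theorem sub_one_div_log_lt_add_one_div_two {q : ℝ} (hq : 1 < q) :
    (q - 1) / log q < (q + 1) / 2 := by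
  set t := (q - 1) / (q + 1) with ht
  have ht0 : 0 < t := div_pos (by linarith) (by linarith)
  have ht1 : t < 1 := (div_lt_one (by linarith)).mpr (by linarith)
  have hq_eq : (1 + t) / (1 - t) = q := by
    rw [ht]; field_simp; ring
  -- the first two terms of the series `log q = 2 (t + t³/3 + t⁵/5 + ⋯)`
  have hseries := sum_range_le_log_div ht0.le ht1 2
  rw [hq_eq, Finset.sum_range_succ, Finset.sum_range_one] at hseries
  have hlog : 2 * t < log q := by norm_num at hseries; nlinarith [pow_pos ht0 3]
  have ht_mul : t * (q + 1) = q - 1 := by rw [ht]; field_simp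
  rw [div_lt_div_iff₀ (log_pos hq) two_pos]
  calc (q - 1) * 2 = (q + 1) * (2 * t) := by rw [← ht_mul]; ring
    _ < (q + 1) * log q := mul_lt_mul_of_pos_left hlog (by linarith)

theorem poisson_excess_risk_lt_half_general (x μ qmax : ℝ) (hμ : 0 < μ)
    (hq : 1 < qmax) (hroot : x * Real.log qmax - μ * (qmax - 1) = 0) :
    x / μ - 1 < (qmax - 1) / 2 := by
  have hmle : x / μ = (qmax - 1) / log qmax := by
    rw [div_eq_div_iff hμ.ne' (log_pos hq).ne']
    linarith
  have hmean := sub_one_div_log_lt_add_one_div_two hq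
  linarith

theorem poisson_excess_risk_lt_half (x μ qmax : ℝ) (hμ : 0 < μ) (hx : μ < x)
    (hq : 1 < qmax) (hroot : x * Real.log qmax - μ * (qmax - 1) = 0) :
    x / μ - 1 < (qmax - 1) / 2 :=
  poisson_excess_risk_lt_half_general x μ qmax hμ hq hroot
end

section
/- (Linear-time subset scanning structure for Poisson) Order the nodes by priority G(v_i) = x_i/μ_i in decreasing order. Then for the Poisson score F(S) = C log(C/B) + B − C (with C = Σ_{i∈S} x_i, B = Σ_{i∈S} μ_i, and F(S)=0 for C ≤ B), some prefix {v_(1), …, v_(k)} of the priority ordering achieves the maximum of F over all subsets S. -/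
/-!
For `q ≥ 1` the score `C log (C/B) + B - C` (or `0` when `C ≤ B`) dominates the linear function
`C log q - B (q - 1)` of `(C, B)`, with equality at `q = C / B` (resp. `q = 1`): the score is the
upper envelope of a family of functions that are additive over the nodes. Take a maximizer `S₀`
and a `q` at which its score is attained. The additive function
`∑_{i ∈ S} (x_i log q - μ_i (q - 1))` is maximized by the set of its nonnegative summands,
`{i | (q - 1) / log q ≤ x_i / μ_i}`, a prefix of the priority order; the score of that prefix is
at least this maximum, hence at least the score of `S₀`.
-/

open Finset Real

noncomputable def poissonScore (C B : ℝ) : ℝ :=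
  if B < C then C * log (C / B) + B - C else 0

noncomputable def poissonMinorant (q c b : ℝ) : ℝ :=
  c * log q - b * (q - 1)

theorem poissonMinorant_le_poissonScore {q C B : ℝ} (hC : 0 ≤ C) (hB : 0 < B) (hq : 1 ≤ q) :
    poissonMinorant q C B ≤ poissonScore C B := by
  have hlog := log_le_sub_one_of_pos (zero_lt_one.trans_le hq)
  unfold poissonMinorant poissonScore
  split_ifs with hBC
  · have hCpos : 0 < C := hB.trans hBC
    have key : log q - log (C / B) ≤ q * B / C - 1 := by
      rw [← log_div (by positivity) (by positivity)]
      convert log_le_sub_one_of_pos (x := q * B / C) (by positivity) using 2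
      field_simp
    have := mul_le_mul_of_nonneg_left key hCpos.le
    rw [mul_sub, mul_sub, mul_div_cancel₀ _ hCpos.ne'] at this
    linarith
  · nlinarith

theorem exists_poissonMinorant_eq_poissonScore {C B : ℝ} (hB : 0 < B) :
    ∃ q, 1 ≤ q ∧ poissonMinorant q C B = poissonScore C B := by
  unfold poissonScore
  split_ifs with hBC
  · refine ⟨C / B, (one_le_div hB).2 hBC.le, ?_⟩
    rw [poissonMinorant, mul_sub, mul_div_cancel₀ _ hB.ne']
    ring
  · exact ⟨1, le_rfl, by simp [poissonMinorant]⟩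

theorem poissonMinorant_nonneg_of_div_le {q c b c' b' : ℝ} (hq : 1 ≤ q) (hb : 0 < b) (hb' : 0 < b')
    (hdiv : c / b ≤ c' / b') (h : 0 ≤ poissonMinorant q c b) : 0 ≤ poissonMinorant q c' b' := by
  have hfactor : ∀ {c b : ℝ}, 0 < b → poissonMinorant q c b = b * (c / b * log q - (q - 1)) := by
    intro c b hb
    rw [poissonMinorant]
    field_simp
  rw [hfactor hb] at h
  rw [hfactor hb']
  have := mul_le_mul_of_nonneg_right hdiv (log_nonneg hq)
  have := (mul_nonneg_iff_of_pos_left hb).1 h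
  exact mul_nonneg hb'.le (by linarith)

theorem Finset.sum_le_sum_filter_nonneg {ι M : Type*} [Fintype ι] [AddCommMonoid M] [LinearOrder M]
    [IsOrderedAddMonoid M] (f : ι → M) (S : Finset ι) :
    ∑ i ∈ S, f i ≤ ∑ i ∈ univ.filter (fun i => 0 ≤ f i), f i := by
  rw [sum_filter]
  calc ∑ i ∈ S, f i ≤ ∑ i ∈ S, if 0 ≤ f i then f i else 0 :=
        sum_le_sum fun i _ => by split_ifs with h <;> simp_all [le_of_not_ge]
    _ ≤ ∑ i, if 0 ≤ f i then f i else 0 :=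
        sum_le_sum_of_subset_of_nonneg (subset_univ S) fun i _ _ => by split_ifs <;> simp_all

theorem Fin.exists_eq_filter_lt_of_isLowerSet {n : ℕ} {T : Finset (Fin n)}
    (hT : IsLowerSet (T : Set (Fin n))) :
    ∃ k ≤ n, T = univ.filter (fun i : Fin n => (i : ℕ) < k) := by
  rcases hT.eq_univ_or_Iio with h | ⟨a, h⟩
  · exact ⟨n, le_rfl, by ext i; rw [← mem_coe, h]; simp⟩
  · exact ⟨a, a.is_le', by ext i; rw [← mem_coe, h]; simp⟩

section

variable {ι : Type*} (x μ : ι → ℝ)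

theorem sum_poissonMinorant (q : ℝ) (S : Finset ι) :
    ∑ i ∈ S, poissonMinorant q (x i) (μ i) = poissonMinorant q (∑ i ∈ S, x i) (∑ i ∈ S, μ i) := by
  simp only [poissonMinorant, sum_sub_distrib, sum_mul]

theorem sum_poissonMinorant_le_poissonScore (hx : ∀ i, 0 ≤ x i) (hμ : ∀ i, 0 < μ i) {q : ℝ}
    (hq : 1 ≤ q) (S : Finset ι) :
    ∑ i ∈ S, poissonMinorant q (x i) (μ i) ≤ poissonScore (∑ i ∈ S, x i) (∑ i ∈ S, μ i) := by
  rcases S.eq_empty_or_nonempty with rfl | hS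
  · simp [poissonScore]
  · rw [sum_poissonMinorant]
    exact poissonMinorant_le_poissonScore (sum_nonneg fun i _ => hx i)
      (sum_pos (fun i _ => hμ i) hS) hq

theorem exists_sum_poissonMinorant_eq_poissonScore (hμ : ∀ i, 0 < μ i) (S : Finset ι) :
    ∃ q, 1 ≤ q ∧
      ∑ i ∈ S, poissonMinorant q (x i) (μ i) = poissonScore (∑ i ∈ S, x i) (∑ i ∈ S, μ i) := by
  rcases S.eq_empty_or_nonempty with rfl | hS
  · exact ⟨1, le_rfl, by simp [poissonScore]⟩
  · simp only [sum_poissonMinorant]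
    exact exists_poissonMinorant_eq_poissonScore (sum_pos (fun i _ => hμ i) hS)

end

theorem ltss_poisson {n : ℕ} (x μ : Fin n → ℝ)
    (hx : ∀ i, 0 ≤ x i) (hμ : ∀ i, 0 < μ i)
    (hsorted : ∀ i j : Fin n, i ≤ j → x j / μ j ≤ x i / μ i)
    (F : Finset (Fin n) → ℝ)
    (hF : ∀ S : Finset (Fin n), F S =
      if (∑ i ∈ S, μ i) < (∑ i ∈ S, x i) then
        (∑ i ∈ S, x i) * Real.log ((∑ i ∈ S, x i) / (∑ i ∈ S, μ i))
          + (∑ i ∈ S, μ i) - (∑ i ∈ S, x i)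
      else 0) :
    ∃ k : ℕ, k ≤ n ∧ ∀ S : Finset (Fin n),
      F S ≤ F (Finset.univ.filter (fun i : Fin n => (i : ℕ) < k)) := by
  have hF : ∀ S, F S = poissonScore (∑ i ∈ S, x i) (∑ i ∈ S, μ i) := hF
  obtain ⟨S₀, -, hS₀⟩ := exists_max_image univ F ⟨∅, mem_univ _⟩
  obtain ⟨q, hq, hqS₀⟩ := exists_sum_poissonMinorant_eq_poissonScore x μ hμ S₀
  set T := univ.filter fun i => 0 ≤ poissonMinorant q (x i) (μ i)
  have hT : IsLowerSet (T : Set (Fin n)) := fun j i hij hj => by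
    simp only [T, coe_filter, mem_univ, true_and, Set.mem_ofPred_eq] at hj ⊢
    exact poissonMinorant_nonneg_of_div_le hq (hμ j) (hμ i) (hsorted i j hij) hj
  obtain ⟨k, hk, hTk⟩ := Fin.exists_eq_filter_lt_of_isLowerSet hT
  refine ⟨k, hk, fun S => ?_⟩
  calc F S ≤ F S₀ := hS₀ S (mem_univ S)
    _ = ∑ i ∈ S₀, poissonMinorant q (x i) (μ i) := (hF S₀).trans hqS₀.symm
    _ ≤ ∑ i ∈ T, poissonMinorant q (x i) (μ i) := sum_le_sum_filter_nonneg _ S₀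
    _ ≤ F T := (sum_poissonMinorant_le_poissonScore x μ hx hμ hq T).trans_eq (hF T).symm
    _ = _ := by rw [hTk]
end

section
/- (Lemma 1, Gaussian case) Let each node i have observed excess risk g_i = x_i/μ_i − 1, let S^T be the affected set, and define r_min^aff = min_{i∈S^T} g_i, r_max^aff = max_{i∈S^T} g_i, r_max^unaff = max_{i∉S^T} g_i. For the Gaussian score (where excess-risk map satisfies r^mle = r^max/2), if the signal is 2-homogeneous (r_max^aff < 2·r_min^aff) and 1-strong (r_min^aff > r_max^unaff), then the highest-scoring unconstrained subset S* satisfies S* ⊇ S^T. -/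
/-!
Write `g i = x i / μ i - 1`. The score of `S` at `q` is the concave quadratic
`A (q - 1) - B (q - 1)² / 2` with `A = ∑ (x i - μ i)` and `B = ∑ μ i`, maximised at the
MLE `q̂ = 1 + A / B` with value `A² / (2B)`; node `i` contributes positively exactly when
`1 < q < 1 + 2 g i`. Since `ST` scores positively, so does the optimum `S*`, hence `A > 0`
and `q̂ - 1 = ∑ μ j g j / ∑ μ j` is a weighted mean of the `g j` over `S*`. Homogeneity and
strength bound every such `g j` by `2 g i` for `i ∈ ST`, so `q̂ < 1 + 2 g i`: a missing node
of `ST` would add a positive contribution at `q̂` and strictly improve `S*`.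
-/

open Finset

section GaussianScore

variable {V : Type*} (x μ : V → ℝ)

noncomputable def excessRisk (i : V) : ℝ := x i / μ i - 1

noncomputable def nodeScore (q : ℝ) (i : V) : ℝ := (x i - μ i) * (q - 1) - μ i * (q - 1) ^ 2 / 2

def scoreSet (S : Finset V) : Set ℝ := {y | ∃ q : ℝ, 1 < q ∧ y = ∑ i ∈ S, nodeScore x μ q i}

variable {x μ}

lemma sub_eq_mul_excessRisk {i : V} (hμ : μ i ≠ 0) : x i - μ i = μ i * excessRisk x μ i := by
  unfold excessRisk
  field_simp

lemma nodeScore_pos {q : ℝ} {i : V} (hμ : 0 < μ i) (hq : 1 < q)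
    (hq' : q < 1 + 2 * excessRisk x μ i) : 0 < nodeScore x μ q i := by
  have hfactor : nodeScore x μ q i = μ i * (q - 1) * (excessRisk x μ i - (q - 1) / 2) := by
    rw [nodeScore, sub_eq_mul_excessRisk hμ.ne']
    ring
  rw [hfactor]
  exact mul_pos (mul_pos hμ (by linarith)) (by linarith)

lemma sum_nodeScore (S : Finset V) (q : ℝ) :
    ∑ i ∈ S, nodeScore x μ q i =
      (∑ i ∈ S, (x i - μ i)) * (q - 1) - (∑ i ∈ S, μ i) * (q - 1) ^ 2 / 2 := by
  simp only [nodeScore]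
  rw [sum_sub_distrib, ← sum_mul, ← sum_div, ← sum_mul]

lemma scoreSet_nonempty (S : Finset V) : (scoreSet x μ S).Nonempty :=
  ⟨_, 2, one_lt_two, rfl⟩

lemma sum_nodeScore_le {S : Finset V} (hB : 0 < ∑ i ∈ S, μ i) (q : ℝ) :
    ∑ i ∈ S, nodeScore x μ q i ≤ (∑ i ∈ S, (x i - μ i)) ^ 2 / (2 * ∑ i ∈ S, μ i) := by
  rw [sum_nodeScore, le_div_iff₀ (by positivity)]
  nlinarith [sq_nonneg (∑ i ∈ S, (x i - μ i) - (∑ i ∈ S, μ i) * (q - 1))]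

lemma sum_nodeScore_mle {S : Finset V} (hB : ∑ i ∈ S, μ i ≠ 0) :
    ∑ i ∈ S, nodeScore x μ (1 + (∑ i ∈ S, (x i - μ i)) / ∑ i ∈ S, μ i) i =
      (∑ i ∈ S, (x i - μ i)) ^ 2 / (2 * ∑ i ∈ S, μ i) := by
  rw [sum_nodeScore]
  field_simp
  ring

lemma scoreSet_bddAbove {S : Finset V} (hB : 0 < ∑ i ∈ S, μ i) : BddAbove (scoreSet x μ S) := by
  refine ⟨(∑ i ∈ S, (x i - μ i)) ^ 2 / (2 * ∑ i ∈ S, μ i), ?_⟩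
  rintro y ⟨q, -, rfl⟩
  exact sum_nodeScore_le hB q

lemma sum_nodeScore_le_sSup {S : Finset V} (hB : 0 < ∑ i ∈ S, μ i) {q : ℝ} (hq : 1 < q) :
    ∑ i ∈ S, nodeScore x μ q i ≤ sSup (scoreSet x μ S) :=
  le_csSup (scoreSet_bddAbove hB) ⟨q, hq, rfl⟩

lemma sSup_scoreSet_nonpos {S : Finset V} (hμ : ∀ i ∈ S, 0 ≤ μ i)
    (hA : ∑ i ∈ S, (x i - μ i) ≤ 0) : sSup (scoreSet x μ S) ≤ 0 := by
  refine csSup_le (scoreSet_nonempty S) ?_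
  rintro y ⟨q, hq, rfl⟩
  have hB : 0 ≤ ∑ i ∈ S, μ i := sum_nonneg hμ
  rw [sum_nodeScore]
  nlinarith [mul_nonneg hB (sq_nonneg (q - 1)),
    mul_nonpos_of_nonpos_of_nonneg hA (sub_nonneg.2 hq.le)]

lemma sum_mu_pos_of_sum_sub_pos {S : Finset V} (hμ : ∀ i ∈ S, 0 < μ i)
    (hA : 0 < ∑ i ∈ S, (x i - μ i)) : 0 < ∑ i ∈ S, μ i := by
  refine sum_pos hμ (nonempty_iff_ne_empty.2 ?_)
  rintro rfl
  simp at hA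

lemma sSup_scoreSet_eq {S : Finset V} (hμ : ∀ i ∈ S, 0 < μ i)
    (hA : 0 < ∑ i ∈ S, (x i - μ i)) :
    sSup (scoreSet x μ S) = (∑ i ∈ S, (x i - μ i)) ^ 2 / (2 * ∑ i ∈ S, μ i) := by
  have hB := sum_mu_pos_of_sum_sub_pos hμ hA
  refine le_antisymm (csSup_le (scoreSet_nonempty S) ?_) ?_
  · rintro y ⟨q, -, rfl⟩
    exact sum_nodeScore_le hB q
  · rw [← sum_nodeScore_mle hB.ne']
    exact sum_nodeScore_le_sSup hB (lt_add_of_pos_right 1 (div_pos hA hB))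

lemma sum_sub_div_sum_lt {S : Finset V} (hS : S.Nonempty) (hμ : ∀ i ∈ S, 0 < μ i) {c : ℝ}
    (hc : ∀ j ∈ S, excessRisk x μ j < c) : (∑ i ∈ S, (x i - μ i)) / ∑ i ∈ S, μ i < c := by
  rw [div_lt_iff₀ (sum_pos hμ hS), mul_sum]
  refine sum_lt_sum_of_nonempty hS fun j hj => ?_
  rw [sub_eq_mul_excessRisk (hμ j hj).ne', mul_comm c]
  exact mul_lt_mul_of_pos_left (hc j hj) (hμ j hj)

lemma sSup_scoreSet_lt_insert [DecidableEq V] {S : Finset V} {i : V} (hi : i ∉ S)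
    (hμ : ∀ j ∈ insert i S, 0 < μ j) (hA : 0 < ∑ j ∈ S, (x j - μ j))
    (hmle : (∑ j ∈ S, (x j - μ j)) / ∑ j ∈ S, μ j < 2 * excessRisk x μ i) :
    sSup (scoreSet x μ S) < sSup (scoreSet x μ (insert i S)) := by
  have hμS : ∀ j ∈ S, 0 < μ j := fun j hj => hμ j (mem_insert_of_mem hj)
  have hB := sum_mu_pos_of_sum_sub_pos hμS hA
  set q := 1 + (∑ j ∈ S, (x j - μ j)) / ∑ j ∈ S, μ j
  have hq : 1 < q := lt_add_of_pos_right 1 (div_pos hA hB)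
  have hgain : 0 < nodeScore x μ q i :=
    nodeScore_pos (hμ i (mem_insert_self i S)) hq (by linarith)
  calc sSup (scoreSet x μ S) = ∑ j ∈ S, nodeScore x μ q j := by
        rw [sSup_scoreSet_eq hμS hA, sum_nodeScore_mle hB.ne']
    _ < ∑ j ∈ insert i S, nodeScore x μ q j := by
        rw [sum_insert hi]
        linarith
    _ ≤ sSup (scoreSet x μ (insert i S)) :=
        sum_nodeScore_le_sSup (sum_pos hμ (insert_nonempty i S)) hq

end GaussianScore

theorem lemma1_gaussian_general {V : Type*}
    (x μ : V → ℝ) (hμ : ∀ i, 0 < μ i)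
    (ST : Finset V)
    (F : Finset V → ℝ)
    (hF : ∀ S : Finset V, F S = sSup {y : ℝ | ∃ q : ℝ, 1 < q ∧
        y = ∑ i ∈ S, ((x i - μ i) * (q - 1) - μ i * (q - 1) ^ 2 / 2)})
    -- 2-homogeneous: r_max^aff < 2 · r_min^aff
    (hhom : ∀ i ∈ ST, ∀ j ∈ ST, x i / μ i - 1 < 2 * (x j / μ j - 1))
    -- 1-strong: r_min^aff > r_max^unaff
    (hstrong : ∀ i ∈ ST, ∀ j ∉ ST, x j / μ j - 1 < x i / μ i - 1)
    (Sstar : Finset V) (hmax : ∀ S : Finset V, F S ≤ F Sstar) :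
    ST ⊆ Sstar := by
  classical
  intro i hiT
  by_contra hiS
  have hF' : ∀ S, F S = sSup (scoreSet x μ S) := hF
  have hpos : ∀ j ∈ ST, 0 < excessRisk x μ j := fun j hj => by
    linarith [show excessRisk x μ j < 2 * excessRisk x μ j from hhom j hj j hj]
  have hAT : 0 < ∑ j ∈ ST, (x j - μ j) := sum_pos (fun j hj => by
    rw [sub_eq_mul_excessRisk (hμ j).ne']; exact mul_pos (hμ j) (hpos j hj)) ⟨i, hiT⟩
  have hFT : 0 < F ST := by
    have hBT := sum_mu_pos_of_sum_sub_pos (fun j _ => hμ j) hAT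
    rw [hF', sSup_scoreSet_eq (fun j _ => hμ j) hAT]
    positivity
  have hA : 0 < ∑ j ∈ Sstar, (x j - μ j) := by
    by_contra! hA
    linarith [hmax ST, hF' Sstar ▸ sSup_scoreSet_nonpos (fun j _ => (hμ j).le) hA]
  have hmle : (∑ j ∈ Sstar, (x j - μ j)) / ∑ j ∈ Sstar, μ j < 2 * excessRisk x μ i := by
    refine sum_sub_div_sum_lt (nonempty_of_sum_ne_zero hA.ne') (fun j _ => hμ j) fun j _ => ?_
    by_cases hjT : j ∈ ST
    · exact hhom j hjT i hiT
    · linarith [show excessRisk x μ j < excessRisk x μ i from hstrong i hiT j hjT, hpos i hiT]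
  have hgain := sSup_scoreSet_lt_insert hiS (fun j _ => hμ j) hA hmle
  linarith [hmax (insert i Sstar), hF' Sstar, hF' (insert i Sstar)]

theorem lemma1_gaussian {V : Type*} [Fintype V] [DecidableEq V]
    (x μ : V → ℝ) (hμ : ∀ i, 0 < μ i)
    (ST : Finset V) (hSTne : ST.Nonempty)
    (F : Finset V → ℝ)
    (hF : ∀ S : Finset V, F S = sSup {y : ℝ | ∃ q : ℝ, 1 < q ∧
        y = ∑ i ∈ S, ((x i - μ i) * (q - 1) - μ i * (q - 1) ^ 2 / 2)})
    -- 2-homogeneous: r_max^aff < 2 · r_min^aff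
    (hhom : ∀ i ∈ ST, ∀ j ∈ ST, x i / μ i - 1 < 2 * (x j / μ j - 1))
    -- 1-strong: r_min^aff > r_max^unaff
    (hstrong : ∀ i ∈ ST, ∀ j ∉ ST, x j / μ j - 1 < x i / μ i - 1)
    (Sstar : Finset V) (hmax : ∀ S : Finset V, F S ≤ F Sstar) :
    ST ⊆ Sstar :=
  lemma1_gaussian_general x μ hμ ST F hF hhom hstrong Sstar hmax
end
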